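/- For t, ξ > 0 and every nonnegative integer k, ∫₀^∞ exp(-τ(t+ξ)/2) * L_k(tτ) * L_k(ξτ) dτ = (2/(t+ξ)) * P_k(8tξ/(t+ξ)² - 1), where P_k is the Legendre polynomial of degree k; consequently the kernel B_k(ξ,t) = √(tξ) ∫₀^∞ ℓ_k(tτ) ℓ_k(ξτ) dτ equals (2√(tξ)/(t+ξ)) * P_k(8tξ/(t+ξ)² - 1). -/

import Mathlib

/-- The Laguerre polynomial of degree `k` and type 0. -/
noncomputable def laguerreFn (k : ℕ) (x : ℝ) : ℝ :=
  ∑ i ∈ Finset.range (k + 1), (-1 : ℝ) ^ i * (Nat.choose k (k - i)) * x ^ i / (Nat.factorial i)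

/-- The Legendre polynomial `P_n(x) = (1/(2^n n!)) dⁿ/dxⁿ (x²-1)^n` (Rodrigues formula). -/
noncomputable def legendreFn (n : ℕ) (x : ℝ) : ℝ :=
  (1 / (2 ^ n * (Nat.factorial n))) * iteratedDeriv n (fun y : ℝ => (y ^ 2 - 1) ^ n) x

/-!
Expanding both Laguerre polynomials and integrating termwise with
`∫₀^∞ τⁿ e^{-sτ} dτ = n!/s^{n+1}` turns the integral into
`(1/s) ∑_{i,j} C(k,i) C(k,j) C(i+j,i) uⁱ vʲ` with `u = -t/s`, `v = -ξ/s`, `s = (t+ξ)/2`.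
Vandermonde's identity `C(i+j,i) = ∑_m C(i,m) C(j,m)` factors this double sum as
`∑_m C(k,m)² ((1+u)(1+v))^{k-m} (uv)^m`. Leibniz' rule applied to Rodrigues' formula for
`(x²-1)^k = (x-1)^k (x+1)^k` gives `P_k(x) = ∑_m C(k,m)² ((x-1)/2)^{k-m} ((x+1)/2)^m`, and at
`x = 8tξ/(t+ξ)² - 1` one has `(x-1)/2 = (1+u)(1+v)` and `(x+1)/2 = uv`.
-/

open Finset Real MeasureTheory
open scoped Nat

theorem Nat.add_choose_eq_sum_choose_mul_choose (i j : ℕ) {n : ℕ} (hj : j < n) :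
    (i + j).choose i = ∑ m ∈ range n, i.choose m * j.choose m := by
  rw [Nat.choose_symm_add, Nat.add_choose_eq, Nat.sum_antidiagonal_eq_sum_range_succ_mk]
  refine sum_subset_zero_on_sdiff (range_subset_range.2 hj) (fun m hm => ?_)
    (fun m hm => by rw [Nat.choose_symm (Nat.le_of_lt_succ (mem_range.1 hm))])
  rw [mem_sdiff, mem_range, mem_range] at hm
  rw [Nat.choose_eq_zero_of_lt (by omega : j < m), mul_zero]

section CommSemiring

variable {R : Type*} [CommSemiring R]

theorem sum_range_choose_mul_choose_mul_pow (k m : ℕ) (x : R) :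
    ∑ i ∈ range (k + 1), (k.choose i * i.choose m : R) * x ^ i
      = k.choose m * x ^ m * (1 + x) ^ (k - m) := by
  obtain hkm | hmk := lt_or_ge k m
  · rw [Nat.choose_eq_zero_of_lt hkm, Nat.cast_zero, zero_mul, zero_mul]
    refine sum_eq_zero fun i hi => ?_
    rw [Nat.choose_eq_zero_of_lt (n := i) (by rw [mem_range] at hi; omega), Nat.cast_zero,
      mul_zero, zero_mul]
  obtain ⟨n, rfl⟩ := Nat.exists_eq_add_of_le hmk
  rw [add_assoc, sum_range_add, Nat.add_sub_cancel_left, add_comm 1 x, add_pow, mul_sum]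
  rw [sum_eq_zero fun i hi => by rw [Nat.choose_eq_zero_of_lt (mem_range.1 hi)]; simp, zero_add]
  refine sum_congr rfl fun a _ => ?_
  have h := Nat.choose_mul (n := m + n) (k := m + a) (Nat.le_add_right m a)
  rw [Nat.add_sub_cancel_left, Nat.add_sub_cancel_left] at h
  rw [one_pow, mul_one, pow_add, ← Nat.cast_mul, h, Nat.cast_mul]
  ring

theorem sum_sum_choose_mul_choose_mul_add_choose_mul_pow (k : ℕ) (x y : R) :
    ∑ i ∈ range (k + 1), ∑ j ∈ range (k + 1),
        (k.choose i * k.choose j * (i + j).choose i : R) * x ^ i * y ^ j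
      = ∑ m ∈ range (k + 1),
          (k.choose m ^ 2 : R) * ((1 + x) * (1 + y)) ^ (k - m) * (x * y) ^ m :=
  calc _ = ∑ i ∈ range (k + 1), ∑ j ∈ range (k + 1), ∑ m ∈ range (k + 1),
          (k.choose i * i.choose m : R) * x ^ i * ((k.choose j * j.choose m : R) * y ^ j) := by
        refine sum_congr rfl fun i _ => sum_congr rfl fun j hj => ?_
        rw [Nat.add_choose_eq_sum_choose_mul_choose i j (mem_range.1 hj)]
        push_cast
        rw [mul_sum, sum_mul, sum_mul]
        exact sum_congr rfl fun m _ => by ring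
    _ = ∑ m ∈ range (k + 1), (∑ i ∈ range (k + 1), (k.choose i * i.choose m : R) * x ^ i) *
          ∑ j ∈ range (k + 1), (k.choose j * j.choose m : R) * y ^ j := by
        simp_rw [sum_mul_sum]
        exact (sum_congr rfl fun i _ => sum_comm).trans sum_comm
    _ = _ := by
        simp_rw [sum_range_choose_mul_choose_mul_pow, mul_pow]
        exact sum_congr rfl fun m _ => by ring

end CommSemiring

theorem iteratedDeriv_sub_const_pow {𝕜 : Type*} [NontriviallyNormedField 𝕜] (n k : ℕ)
    (a x : 𝕜) :
    iteratedDeriv n (fun y => (y - a) ^ k) x = k.descFactorial n * (x - a) ^ (k - n) := by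
  rw [iteratedDeriv_comp_sub_const n (· ^ k) a]
  exact iteratedDeriv_pow k n

theorem Nat.choose_mul_descFactorial_mul_descFactorial {k i : ℕ} (hi : i ≤ k) :
    k.choose i * k.descFactorial i * k.descFactorial (k - i) = k.choose i ^ 2 * k ! := by
  rw [Nat.descFactorial_eq_factorial_mul_choose, Nat.descFactorial_eq_factorial_mul_choose,
    Nat.choose_symm hi, ← Nat.choose_mul_factorial_mul_factorial hi]
  ring

theorem legendreFn_eq_sum (k : ℕ) (x : ℝ) :
    legendreFn k x = ∑ m ∈ range (k + 1),
      (k.choose m ^ 2 : ℝ) * ((x - 1) / 2) ^ (k - m) * ((x + 1) / 2) ^ m := by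
  have hfactor : (fun y : ℝ => (y ^ 2 - 1) ^ k) = fun y => (y - 1) ^ k * (y - -1) ^ k := by
    funext y; rw [← mul_pow]; ring
  rw [legendreFn, hfactor, iteratedDeriv_fun_mul (by fun_prop) (by fun_prop), mul_sum]
  refine sum_congr rfl fun m hm => ?_
  have hmk : m ≤ k := Nat.le_of_lt_succ (mem_range.1 hm)
  have hcoeff : (k.choose m * k.descFactorial m * k.descFactorial (k - m) : ℝ)
      = k.choose m ^ 2 * k ! := by
    exact_mod_cast Nat.choose_mul_descFactorial_mul_descFactorial hmk
  rw [iteratedDeriv_sub_const_pow, iteratedDeriv_sub_const_pow, Nat.sub_sub_self hmk,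
    sub_neg_eq_add, div_pow, div_pow, ← pow_sub_mul_pow (2 : ℝ) hmk]
  field_simp
  linear_combination (x - 1) ^ (k - m) * (x + 1) ^ m * hcoeff

theorem integral_pow_mul_exp_neg_mul_Ioi (n : ℕ) {r : ℝ} (hr : 0 < r) :
    ∫ τ in Set.Ioi 0, τ ^ n * exp (-(r * τ)) = n ! / r ^ (n + 1) := by
  have h := integral_rpow_mul_exp_neg_mul_Ioi (a := n + 1) (by positivity) hr
  simp only [add_sub_cancel_right, rpow_natCast, Gamma_nat_eq_factorial] at h
  rw [h, ← Nat.cast_succ, rpow_natCast, one_div, inv_pow, inv_mul_eq_div]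

theorem integrableOn_pow_mul_exp_neg_mul_Ioi (n : ℕ) {r : ℝ} (hr : 0 < r) :
    IntegrableOn (fun τ => τ ^ n * exp (-(r * τ))) (Set.Ioi 0) :=
  .of_integral_ne_zero (by rw [integral_pow_mul_exp_neg_mul_Ioi n hr]; positivity)

theorem laguerreFn_eq_sum (k : ℕ) (x : ℝ) :
    laguerreFn k x = ∑ i ∈ range (k + 1), (k.choose i / i ! : ℝ) * (-x) ^ i := by
  refine sum_congr rfl fun i hi => ?_
  rw [Nat.choose_symm (Nat.le_of_lt_succ (mem_range.1 hi)), neg_pow]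
  ring

theorem integral_exp_mul_laguerreFn_mul_laguerreFn_eq_sum_sum (k : ℕ) (a b : ℝ) {s : ℝ}
    (hs : 0 < s) :
    ∫ τ in Set.Ioi 0, exp (-(s * τ)) * laguerreFn k (a * τ) * laguerreFn k (b * τ) =
      1 / s * ∑ i ∈ range (k + 1), ∑ j ∈ range (k + 1),
        (k.choose i * k.choose j * (i + j).choose i : ℝ) * (-a / s) ^ i * (-b / s) ^ j := by
  set c : ℕ → ℕ → ℝ :=
    fun i j => k.choose i / i ! * (k.choose j / j !) * (-a) ^ i * (-b) ^ j
  have hexpand (τ : ℝ) : exp (-(s * τ)) * laguerreFn k (a * τ) * laguerreFn k (b * τ) =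
      ∑ i ∈ range (k + 1), ∑ j ∈ range (k + 1),
        c i j * (τ ^ (i + j) * exp (-(s * τ))) := by
    rw [laguerreFn_eq_sum, laguerreFn_eq_sum, mul_assoc, sum_mul_sum, mul_sum]
    refine sum_congr rfl fun i _ => ?_
    rw [mul_sum]
    exact sum_congr rfl fun j _ => by ring
  have hint (i j : ℕ) := (integrableOn_pow_mul_exp_neg_mul_Ioi (i + j) hs).const_mul (c i j)
  simp_rw [hexpand]
  rw [integral_finsetSum _ fun i _ => integrable_finsetSum _ fun j _ => hint i j, mul_sum]
  refine sum_congr rfl fun i _ => ?_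
  rw [integral_finsetSum _ fun j _ => hint i j, mul_sum]
  refine sum_congr rfl fun j _ => ?_
  rw [integral_const_mul, integral_pow_mul_exp_neg_mul_Ioi _ hs,
    ← Nat.add_choose_mul_factorial_mul_factorial, Nat.choose_symm_add]
  simp only [c, div_pow, Nat.cast_mul]
  field_simp
  ring

theorem integral_exp_mul_laguerreFn_mul_laguerreFn (k : ℕ) (a b : ℝ) {s : ℝ} (hs : 0 < s) :
    ∫ τ in Set.Ioi 0, exp (-(s * τ)) * laguerreFn k (a * τ) * laguerreFn k (b * τ) =
      1 / s * ∑ m ∈ range (k + 1),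
        (k.choose m ^ 2 : ℝ) * ((1 - a / s) * (1 - b / s)) ^ (k - m) * (a * b / s ^ 2) ^ m := by
  rw [integral_exp_mul_laguerreFn_mul_laguerreFn_eq_sum_sum k a b hs,
    sum_sum_choose_mul_choose_mul_add_choose_mul_pow]
  congr 1
  refine sum_congr rfl fun m _ => ?_
  ring

theorem integral_exp_mul_laguerreFn_mul_laguerreFn_eq_legendreFn (k : ℕ) {t ξ : ℝ}
    (hts : 0 < t + ξ) :
    ∫ τ in Set.Ioi 0, exp (-(τ * (t + ξ)) / 2) * laguerreFn k (t * τ) * laguerreFn k (ξ * τ)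
      = 2 / (t + ξ) * legendreFn k (8 * t * ξ / (t + ξ) ^ 2 - 1) := by
  have hexp (τ : ℝ) : exp (-(τ * (t + ξ)) / 2) = exp (-((t + ξ) / 2 * τ)) := by ring_nf
  have hminus : (1 - t / ((t + ξ) / 2)) * (1 - ξ / ((t + ξ) / 2))
      = (8 * t * ξ / (t + ξ) ^ 2 - 1 - 1) / 2 := by
    field_simp; ring
  have hplus : t * ξ / ((t + ξ) / 2) ^ 2 = (8 * t * ξ / (t + ξ) ^ 2 - 1 + 1) / 2 := by
    field_simp; ring
  simp_rw [hexp]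
  rw [integral_exp_mul_laguerreFn_mul_laguerreFn k t ξ (half_pos hts), legendreFn_eq_sum,
    one_div_div, hminus, hplus]

theorem stmt16 (k : ℕ) (t ξ : ℝ) (ht : 0 < t) (hξ : 0 < ξ) :
    (∫ τ in Set.Ioi (0 : ℝ),
        Real.exp (-(τ * (t + ξ)) / 2) * laguerreFn k (t * τ) * laguerreFn k (ξ * τ))
      = (2 / (t + ξ)) * legendreFn k (8 * t * ξ / (t + ξ) ^ 2 - 1) ∧
    Real.sqrt (t * ξ) * (∫ τ in Set.Ioi (0 : ℝ),
        (Real.exp (-(t * τ) / 2) * laguerreFn k (t * τ)) *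
          (Real.exp (-(ξ * τ) / 2) * laguerreFn k (ξ * τ)))
      = (2 * Real.sqrt (t * ξ) / (t + ξ)) * legendreFn k (8 * t * ξ / (t + ξ) ^ 2 - 1) := by
  have hlaplace := integral_exp_mul_laguerreFn_mul_laguerreFn_eq_legendreFn k (add_pos ht hξ)
  have hprod (τ : ℝ) : exp (-(t * τ) / 2) * laguerreFn k (t * τ) *
      (exp (-(ξ * τ) / 2) * laguerreFn k (ξ * τ)) =
        exp (-(τ * (t + ξ)) / 2) * laguerreFn k (t * τ) * laguerreFn k (ξ * τ) := by
    rw [show -(τ * (t + ξ)) / 2 = -(t * τ) / 2 + -(ξ * τ) / 2 by ring, exp_add]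
    ring
  refine ⟨hlaplace, ?_⟩
  simp_rw [hprod, hlaplace]
  ring
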